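/- Let d ∈ ℕ and let a = (p₁/q₁, …, p_d/q_d) with all qᵢ > 0. Suppose for each sign pattern ξ ∈ {+,−}^d we are given a tuple b_ξ = (p₁^ξ/q₁^ξ, …, p_d^ξ/q_d^ξ) with all qᵢ^ξ > 0, such that for every i, pᵢ^ξ/qᵢ^ξ > pᵢ/qᵢ when ξᵢ = +, and pᵢ^ξ/qᵢ^ξ < pᵢ/qᵢ when ξᵢ = −. Then there exist nonnegative reals (θ_ξ)_{ξ∈{+,−}^d} with Σ_ξ θ_ξ = 1 such that for every i ∈ {1,…,d}: (Σ_ξ θ_ξ pᵢ^ξ)/(Σ_ξ θ_ξ qᵢ^ξ) = pᵢ/qᵢ. -/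
import Mathlib

/-- Splitting a sum over `(Fin (d+1) → Bool)` according to the first coordinate. -/
lemma sum_bool_tuple_split {d : ℕ} (f : (Fin (d + 1) → Bool) → ℝ) :
    ∑ ξ, f ξ = ∑ η : Fin d → Bool, (f (Fin.cons true η) + f (Fin.cons false η)) := by
  rw [← Equiv.sum_comp (Fin.consEquiv fun _ => Bool) f, Fintype.sum_prod_type, Fintype.sum_bool]
  rw [← Finset.sum_add_distrib]
  rfl

/-- Key abstract lemma: if `F ξ i` is positive when `ξ i = true` and negative when
`ξ i = false`, then some convex combination of the rows of `F` is zero. -/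
lemma multi_mediant_aux : ∀ (d : ℕ) (F : (Fin d → Bool) → Fin d → ℝ),
    (∀ ξ i, (ξ i = true → 0 < F ξ i) ∧ (ξ i = false → F ξ i < 0)) →
    ∃ θ : (Fin d → Bool) → ℝ, (∀ ξ, 0 ≤ θ ξ) ∧ (∑ ξ, θ ξ = 1) ∧
      ∀ i : Fin d, ∑ ξ, θ ξ * F ξ i = 0 := by
  intro d
  induction d with
  | zero =>
    intro F _
    refine ⟨fun _ => 1, fun _ => zero_le_one, ?_, fun i => i.elim0⟩
    simp
  | succ d ih =>
    intro F hF
    have hApos : ∀ η : Fin d → Bool, 0 < F (Fin.cons true η) 0 :=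
      fun η => (hF (Fin.cons true η) 0).1 (by simp)
    have hBneg : ∀ η : Fin d → Bool, F (Fin.cons false η) 0 < 0 :=
      fun η => (hF (Fin.cons false η) 0).2 (by simp)
    have hden : ∀ η : Fin d → Bool, 0 < F (Fin.cons true η) 0 - F (Fin.cons false η) 0 :=
      fun η => by have := hApos η; have := hBneg η; linarith
    set t : (Fin d → Bool) → ℝ :=
      fun η => -F (Fin.cons false η) 0 / (F (Fin.cons true η) 0 - F (Fin.cons false η) 0)
      with ht
    have ht0 : ∀ η, 0 < t η := fun η => div_pos (by linarith [hBneg η]) (hden η)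
    have ht1 : ∀ η, t η < 1 := fun η => by
      rw [ht, div_lt_one (hden η)]; linarith [hApos η]
    have htAB : ∀ η, t η * F (Fin.cons true η) 0 + (1 - t η) * F (Fin.cons false η) 0 = 0 := by
      intro η
      have h : t η * (F (Fin.cons true η) 0 - F (Fin.cons false η) 0)
          = -F (Fin.cons false η) 0 := div_mul_cancel₀ _ (hden η).ne'
      nlinarith [h]
    set G : (Fin d → Bool) → Fin d → ℝ := fun η i =>
      t η * F (Fin.cons true η) i.succ + (1 - t η) * F (Fin.cons false η) i.succ with hG
    have hGsign : ∀ η i, (η i = true → 0 < G η i) ∧ (η i = false → G η i < 0) := by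
      intro η i
      have h0 := ht0 η; have h1 := ht1 η
      constructor
      · intro h
        have ha : 0 < F (Fin.cons true η) i.succ :=
          (hF (Fin.cons true η) i.succ).1 (by simpa using h)
        have hb : 0 < F (Fin.cons false η) i.succ :=
          (hF (Fin.cons false η) i.succ).1 (by simpa using h)
        simp only [hG]
        nlinarith
      · intro h
        have ha : F (Fin.cons true η) i.succ < 0 :=
          (hF (Fin.cons true η) i.succ).2 (by simpa using h)
        have hb : F (Fin.cons false η) i.succ < 0 :=
          (hF (Fin.cons false η) i.succ).2 (by simpa using h)
        simp only [hG]
        nlinarith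
    obtain ⟨θ', hθ'0, hθ'1, hθ'z⟩ := ih G hGsign
    refine ⟨fun ξ => θ' (Fin.tail ξ) * (if ξ 0 then t (Fin.tail ξ) else 1 - t (Fin.tail ξ)),
      ?_, ?_, ?_⟩
    · intro ξ
      apply mul_nonneg (hθ'0 _)
      by_cases h : ξ 0 <;> simp [h] <;> [exact (ht0 _).le; linarith [ht1 (Fin.tail ξ)]]
    · rw [sum_bool_tuple_split]
      simp only [Fin.tail_cons, Fin.cons_zero, Bool.false_eq_true, if_true, if_false]
      have hc : ∀ η ∈ (Finset.univ : Finset (Fin d → Bool)),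
          θ' η * t η + θ' η * (1 - t η) = θ' η := fun η _ => by ring
      rw [Finset.sum_congr rfl hc, hθ'1]
    · intro i
      rw [sum_bool_tuple_split]
      induction i using Fin.cases with
      | zero =>
        simp only [Fin.tail_cons, Fin.cons_zero, Bool.false_eq_true, if_true, if_false]
        have : ∀ η ∈ (Finset.univ : Finset (Fin d → Bool)),
            θ' η * t η * F (Fin.cons true η) 0 + θ' η * (1 - t η) * F (Fin.cons false η) 0
              = 0 := fun η _ => by linear_combination θ' η * htAB η
        rw [Finset.sum_congr rfl this, Finset.sum_const, smul_zero]
      | succ j =>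
        simp only [Fin.tail_cons, Fin.cons_zero, Bool.false_eq_true, if_true, if_false]
        rw [← hθ'z j]
        refine Finset.sum_congr rfl fun η _ => ?_
        simp only [hG]
        ring

/-- Simultaneous mediant interpolation in `d` coordinates: if for every sign pattern
`ξ : Fin d → Bool` we have a tuple of fractions lying coordinatewise strictly on the side
of `p i / q i` indicated by `ξ i`, then some convex combination of numerators and
denominators recovers `p i / q i` in every coordinate. -/
theorem multi_mediant_interpolation (d : ℕ) (p q : Fin d → ℝ) (hq : ∀ i, 0 < q i)
    (P Q : (Fin d → Bool) → Fin d → ℝ) (hQ : ∀ ξ i, 0 < Q ξ i)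
    (hside : ∀ (ξ : Fin d → Bool) (i : Fin d),
      (ξ i = true → p i / q i < P ξ i / Q ξ i) ∧
      (ξ i = false → P ξ i / Q ξ i < p i / q i)) :
    ∃ θ : (Fin d → Bool) → ℝ, (∀ ξ, 0 ≤ θ ξ) ∧ (∑ ξ, θ ξ = 1) ∧
      ∀ i : Fin d, (∑ ξ, θ ξ * P ξ i) / (∑ ξ, θ ξ * Q ξ i) = p i / q i := by
  set F : (Fin d → Bool) → Fin d → ℝ := fun ξ i => q i * P ξ i - p i * Q ξ i with hFdef
  have hFsign : ∀ ξ i, (ξ i = true → 0 < F ξ i) ∧ (ξ i = false → F ξ i < 0) := by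
    intro ξ i
    constructor
    · intro h
      have := (hside ξ i).1 h
      rw [div_lt_div_iff₀ (hq i) (hQ ξ i)] at this
      simp only [hFdef]; linarith
    · intro h
      have := (hside ξ i).2 h
      rw [div_lt_div_iff₀ (hQ ξ i) (hq i)] at this
      simp only [hFdef]; linarith
  obtain ⟨θ, hθ0, hθ1, hθz⟩ := multi_mediant_aux d F hFsign
  refine ⟨θ, hθ0, hθ1, fun i => ?_⟩
  have hQsum : 0 < ∑ ξ, θ ξ * Q ξ i := by
    obtain ⟨ξ₀, hξ₀⟩ : ∃ ξ, 0 < θ ξ := by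
      by_contra h
      push_neg at h
      have : ∀ ξ, θ ξ = 0 := fun ξ => le_antisymm (h ξ) (hθ0 ξ)
      simp [this] at hθ1
    exact Finset.sum_pos' (fun ξ _ => mul_nonneg (hθ0 ξ) (hQ ξ i).le)
      ⟨ξ₀, Finset.mem_univ _, mul_pos hξ₀ (hQ ξ₀ i)⟩
  rw [div_eq_div_iff hQsum.ne' (hq i).ne']
  have key := hθz i
  simp only [hFdef, mul_sub] at key
  rw [Finset.sum_sub_distrib] at key
  have h1 : ∑ ξ, θ ξ * (q i * P ξ i) = q i * ∑ ξ, θ ξ * P ξ i := by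
    rw [Finset.mul_sum]; exact Finset.sum_congr rfl fun ξ _ => by ring
  have h2 : ∑ ξ, θ ξ * (p i * Q ξ i) = p i * ∑ ξ, θ ξ * Q ξ i := by
    rw [Finset.mul_sum]; exact Finset.sum_congr rfl fun ξ _ => by ring
  rw [h1, h2] at key
  linarith
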